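/- The Klein bottle group K = ⟨a, b | a b a⁻¹ = b⁻¹⟩ has exactly four left-invariant total orders, namely those whose positive cones are P(ε,μ) = { a^(εn) b^(μm) : (n ≥ 1 and m ∈ ℤ) or (n = 0 and m ≥ 1) } for ε, μ ∈ {±1}. -/

import Mathlib

/-- The single relator `a b a⁻¹ b` of the Klein bottle group `⟨a, b ∣ a b a⁻¹ = b⁻¹⟩`,
with `a = FreeGroup.of 0` and `b = FreeGroup.of 1`. -/
def kleinRels : Set (FreeGroup (Fin 2)) :=
  {FreeGroup.of 0 * FreeGroup.of 1 * (FreeGroup.of 0)⁻¹ * FreeGroup.of 1}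

/-- The Klein bottle group `K = ⟨a, b ∣ a b a⁻¹ = b⁻¹⟩`. -/
abbrev KleinGroup : Type := PresentedGroup kleinRels

/-- The generator `a` of the Klein bottle group. -/
def Ka : KleinGroup := PresentedGroup.of 0

/-- The generator `b` of the Klein bottle group. -/
def Kb : KleinGroup := PresentedGroup.of 1


/-- `P` is a positive cone: a subsemigroup such that the group is the disjoint union of
`P`, `P⁻¹` and `{1}`. -/
def IsPositiveCone {G : Type*} [Group G] (P : Set G) : Prop :=
  (∀ x ∈ P, ∀ y ∈ P, x * y ∈ P) ∧
  ∀ g : G,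
    (g ∈ P ∨ g⁻¹ ∈ P ∨ g = 1) ∧
    ¬(g ∈ P ∧ g⁻¹ ∈ P) ∧ ¬(g ∈ P ∧ g = 1) ∧ ¬(g⁻¹ ∈ P ∧ g = 1)

/-- The set `P(ε,μ) = { a^(εn) b^(μm) : (n ≥ 1 and m ∈ ℤ) or (n = 0 and m ≥ 1) }`. -/
def kleinP (ε μ : ℤ) : Set KleinGroup :=
  {g | ∃ n m : ℤ, (1 ≤ n ∨ (n = 0 ∧ 1 ≤ m)) ∧ g = Ka ^ (ε * n) * Kb ^ (μ * m)}

/-! ### Auxiliary material -/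

theorem negOnePow_sq (k : ℤ) : (k.negOnePow : ℤ) * (k.negOnePow : ℤ) = 1 := by
  rw [← Units.val_mul, Int.units_mul_self, Units.val_one]

theorem negOnePow_cases (k : ℤ) : (k.negOnePow : ℤ) = 1 ∨ (k.negOnePow : ℤ) = -1 := by
  rcases Int.units_eq_one_or k.negOnePow with h | h <;> rw [h] <;> simp

/-- `ℤ ⋊ ℤ` model of the Klein bottle group. -/
@[ext] structure KZ where
  n : ℤ
  m : ℤ

namespace KZ

instance : Mul KZ := ⟨fun g h => ⟨g.n + h.n, (h.n.negOnePow : ℤ) * g.m + h.m⟩⟩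
instance : One KZ := ⟨⟨0, 0⟩⟩
instance : Inv KZ := ⟨fun g => ⟨-g.n, -((g.n.negOnePow : ℤ) * g.m)⟩⟩

theorem mul_def (g h : KZ) : g * h = ⟨g.n + h.n, (h.n.negOnePow : ℤ) * g.m + h.m⟩ := rfl
theorem inv_def (g : KZ) : g⁻¹ = ⟨-g.n, -((g.n.negOnePow : ℤ) * g.m)⟩ := rfl
theorem one_def : (1 : KZ) = ⟨0, 0⟩ := rfl

instance : Group KZ where
  mul_assoc g h k := by
    simp only [mul_def, Int.negOnePow_add, Units.val_mul]
    ext <;> simp <;> ring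
  one_mul g := by simp [mul_def, one_def]
  mul_one g := by simp [mul_def, one_def]
  inv_mul_cancel g := by
    simp only [mul_def, inv_def, one_def]
    ext <;> simp
    rw [← mul_assoc, negOnePow_sq, one_mul]
    ring

theorem a_zpow (k : ℤ) : (⟨1, 0⟩ : KZ) ^ k = ⟨k, 0⟩ := by
  induction k using Int.induction_on with
  | zero => rfl
  | succ n ih => rw [zpow_add_one, ih, mul_def]; ext <;> simp
  | pred n ih => rw [zpow_sub_one, ih, mul_def, inv_def]; ext <;> simp; ring

theorem b_zpow (l : ℤ) : (⟨0, 1⟩ : KZ) ^ l = ⟨0, l⟩ := by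
  induction l using Int.induction_on with
  | zero => rfl
  | succ n ih => rw [zpow_add_one, ih, mul_def]; ext <;> simp
  | pred n ih => rw [zpow_sub_one, ih, mul_def, inv_def]; ext <;> simp; ring

end KZ

/-! ### Relations in the Klein group -/

theorem klein_rel : Ka * Kb * Ka⁻¹ * Kb = 1 := by
  have h : (PresentedGroup.mk kleinRels)
      (FreeGroup.of 0 * FreeGroup.of 1 * (FreeGroup.of 0)⁻¹ * FreeGroup.of 1) = 1 := by
    apply (QuotientGroup.eq_one_iff _).2
    exact Subgroup.subset_normalClosure (by simp [kleinRels])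
  simpa [map_mul, map_inv, Ka, Kb, PresentedGroup.of] using h

theorem klein_conj : Ka * Kb * Ka⁻¹ = Kb⁻¹ :=
  eq_inv_of_mul_eq_one_left klein_rel

theorem klein_conj_zpow (m : ℤ) : Ka * Kb ^ m * Ka⁻¹ = Kb ^ (-m) := by
  have : (MulAut.conj Ka) (Kb ^ m) = Kb ^ (-m) := by
    rw [map_zpow, MulAut.conj_apply, klein_conj, inv_zpow, zpow_neg]
  simpa [MulAut.conj_apply] using this

theorem klein_conj_zpow' (m : ℤ) : Ka⁻¹ * Kb ^ m * Ka = Kb ^ (-m) := by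
  have h := klein_conj_zpow (-m)
  rw [neg_neg] at h
  rw [← h]
  group

theorem klein_comm (n m : ℤ) : Kb ^ m * Ka ^ n = Ka ^ n * Kb ^ ((n.negOnePow : ℤ) * m) := by
  induction n using Int.induction_on with
  | zero => simp
  | succ k ih =>
      have step : Kb ^ ((k : ℤ).negOnePow * m) * Ka = Ka * Kb ^ (-((k : ℤ).negOnePow * m)) := by
        rw [← klein_conj_zpow' ((k : ℤ).negOnePow * m)]; group
      calc Kb ^ m * Ka ^ ((k : ℤ) + 1) = (Kb ^ m * Ka ^ (k : ℤ)) * Ka := by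
            rw [zpow_add_one, mul_assoc]
        _ = Ka ^ (k : ℤ) * (Kb ^ ((k : ℤ).negOnePow * m) * Ka) := by rw [ih, mul_assoc]
        _ = Ka ^ ((k : ℤ) + 1) * Kb ^ (((k : ℤ) + 1).negOnePow * m) := by
            rw [step, zpow_add_one, Int.negOnePow_succ]
            push_cast
            rw [mul_assoc]
            ring_nf
  | pred k ih =>
      have step : Kb ^ ((-k : ℤ).negOnePow * m) * Ka⁻¹ = Ka⁻¹ * Kb ^ (-((-k : ℤ).negOnePow * m)) := by
        rw [← klein_conj_zpow ((-k : ℤ).negOnePow * m)]; group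
      calc Kb ^ m * Ka ^ ((-k : ℤ) - 1) = (Kb ^ m * Ka ^ (-k : ℤ)) * Ka⁻¹ := by
            rw [zpow_sub_one, mul_assoc]
        _ = Ka ^ (-k : ℤ) * (Kb ^ ((-k : ℤ).negOnePow * m) * Ka⁻¹) := by rw [ih, mul_assoc]
        _ = Ka ^ ((-k : ℤ) - 1) * Kb ^ (((-k : ℤ) - 1).negOnePow * m) := by
            rw [step, zpow_sub_one]
            have : ((-k : ℤ) - 1).negOnePow = -(-k : ℤ).negOnePow := by
              rw [sub_eq_add_neg, Int.negOnePow_add]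
              simp [Int.negOnePow_neg]
            rw [this]
            push_cast
            rw [mul_assoc]
            ring_nf

/-! ### The isomorphism with `KZ` -/

def kf : Fin 2 → KZ := ![⟨1, 0⟩, ⟨0, 1⟩]

theorem kf_rels : ∀ r ∈ kleinRels, FreeGroup.lift kf r = 1 := by
  intro r hr
  simp only [kleinRels, Set.mem_singleton_iff] at hr
  subst hr
  simp only [map_mul, map_inv, FreeGroup.lift_apply_of]
  simp [kf, KZ.mul_def, KZ.inv_def, KZ.one_def]

noncomputable def kphi : KleinGroup →* KZ := PresentedGroup.toGroup kf_rels

theorem kphi_a : kphi Ka = ⟨1, 0⟩ :=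
  PresentedGroup.toGroup.of kf_rels

theorem kphi_b : kphi Kb = ⟨0, 1⟩ :=
  PresentedGroup.toGroup.of kf_rels

noncomputable def kpsi : KZ →* KleinGroup :=
  MonoidHom.mk' (fun g => Ka ^ g.n * Kb ^ g.m) (by
    intro g h
    simp only [KZ.mul_def]
    have hc : Ka ^ h.n * Kb ^ ((h.n.negOnePow : ℤ) * g.m) = Kb ^ g.m * Ka ^ h.n :=
      (klein_comm h.n g.m).symm
    calc Ka ^ (g.n + h.n) * Kb ^ ((h.n.negOnePow : ℤ) * g.m + h.m)
        = Ka ^ g.n * ((Ka ^ h.n * Kb ^ ((h.n.negOnePow : ℤ) * g.m)) * Kb ^ h.m) := by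
          rw [zpow_add, zpow_add]; simp [mul_assoc]
      _ = Ka ^ g.n * ((Kb ^ g.m * Ka ^ h.n) * Kb ^ h.m) := by rw [hc]
      _ = Ka ^ g.n * Kb ^ g.m * (Ka ^ h.n * Kb ^ h.m) := by simp [mul_assoc])

theorem kpsi_apply (g : KZ) : kpsi g = Ka ^ g.n * Kb ^ g.m := rfl

theorem kpsi_kphi (g : KleinGroup) : kpsi (kphi g) = g := by
  have h : kpsi.comp kphi = MonoidHom.id _ := by
    apply PresentedGroup.ext
    intro x
    fin_cases x
    · show kpsi (kphi Ka) = Ka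
      rw [kphi_a, kpsi_apply]; simp
    · show kpsi (kphi Kb) = Kb
      rw [kphi_b, kpsi_apply]; simp
  exact DFunLike.congr_fun h g

theorem kphi_inj : Function.Injective kphi :=
  Function.LeftInverse.injective kpsi_kphi

theorem kphi_ab (n m : ℤ) : kphi (Ka ^ n * Kb ^ m) = ⟨n, m⟩ := by
  rw [map_mul, map_zpow, map_zpow, kphi_a, kphi_b, KZ.a_zpow, KZ.b_zpow, KZ.mul_def]
  ext <;> simp

theorem normal_form (g : KleinGroup) : g = Ka ^ (kphi g).n * Kb ^ (kphi g).m := by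
  conv_lhs => rw [← kpsi_kphi g]
  rfl

/-! ### Membership in `kleinP` -/

theorem mem_kleinP_iff {ε μ : ℤ} (hε : ε = 1 ∨ ε = -1) (hμ : μ = 1 ∨ μ = -1) (g : KleinGroup) :
    g ∈ kleinP ε μ ↔
      (1 ≤ ε * (kphi g).n ∨ ((kphi g).n = 0 ∧ 1 ≤ μ * (kphi g).m)) := by
  have hε2 : ε * ε = 1 := by rcases hε with rfl | rfl <;> norm_num
  have hμ2 : μ * μ = 1 := by rcases hμ with rfl | rfl <;> norm_num
  constructor
  · rintro ⟨n, m, hc, rfl⟩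
    rw [kphi_ab]
    rcases hc with h1 | ⟨h0, h1⟩
    · left
      show 1 ≤ ε * (ε * n)
      rw [← mul_assoc, hε2, one_mul]; exact h1
    · right
      constructor
      · show ε * n = 0; rw [h0, mul_zero]
      · show 1 ≤ μ * (μ * m)
        rw [← mul_assoc, hμ2, one_mul]; exact h1
  · intro h
    refine ⟨ε * (kphi g).n, μ * (kphi g).m, ?_, ?_⟩
    · rcases h with h1 | ⟨h0, h1⟩
      · left; exact h1
      · right; refine ⟨by rw [h0, mul_zero], h1⟩
    · rw [← mul_assoc, ← mul_assoc, hε2, hμ2, one_mul, one_mul]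
      exact normal_form g

theorem kleinP_isCone {ε μ : ℤ} (hε : ε = 1 ∨ ε = -1) (hμ : μ = 1 ∨ μ = -1) :
    IsPositiveCone (kleinP ε μ) := by
  constructor
  · intro x hx y hy
    rw [mem_kleinP_iff hε hμ] at hx hy ⊢
    rw [map_mul, KZ.mul_def]
    set k := (kphi x).n with hk
    set l := (kphi x).m with hl
    set k' := (kphi y).n with hk'
    set l' := (kphi y).m with hl'
    simp only
    rcases hx with h1 | ⟨h0, h1⟩ <;> rcases hy with h2 | ⟨h02, h2⟩
    · left; rcases hε with rfl | rfl <;> omega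
    · left; rcases hε with rfl | rfl <;> omega
    · left; rcases hε with rfl | rfl <;> omega
    · right
      rw [h02, Int.negOnePow_zero]
      refine ⟨by omega, ?_⟩
      simp only [Units.val_one, one_mul]
      rcases hμ with rfl | rfl <;> omega
  · intro g
    have hginv : kphi g⁻¹ = ⟨-(kphi g).n, -(((kphi g).n.negOnePow : ℤ) * (kphi g).m)⟩ := by
      rw [map_inv, KZ.inv_def]
    have hg1 : g = 1 ↔ ((kphi g).n = 0 ∧ (kphi g).m = 0) := by
      constructor
      · intro h; rw [h, map_one]; exact ⟨rfl, rfl⟩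
      · intro ⟨h1, h2⟩
        apply kphi_inj
        rw [map_one, KZ.one_def]
        ext <;> simp [h1, h2]
    rw [mem_kleinP_iff hε hμ, mem_kleinP_iff hε hμ, hginv, hg1]
    set k := (kphi g).n with hk
    set l := (kphi g).m with hl
    simp only
    have hs : k = 0 → ((k.negOnePow : ℤ) = 1) := by
      intro h; rw [h, Int.negOnePow_zero, Units.val_one]
    rcases negOnePow_cases k with h | h <;> rw [h] <;> rw [h] at hs <;>
      rcases hε with rfl | rfl <;> rcases hμ with rfl | rfl <;> omega

theorem ka_mem_iff {ε μ : ℤ} (hε : ε = 1 ∨ ε = -1) (hμ : μ = 1 ∨ μ = -1) :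
    Ka ∈ kleinP ε μ ↔ ε = 1 := by
  have h : Ka = Ka ^ (1 : ℤ) * Kb ^ (0 : ℤ) := by simp
  rw [h, mem_kleinP_iff hε hμ, kphi_ab]
  dsimp only
  rcases hε with rfl | rfl <;> rcases hμ with rfl | rfl <;> omega

theorem kb_mem_iff {ε μ : ℤ} (hε : ε = 1 ∨ ε = -1) (hμ : μ = 1 ∨ μ = -1) :
    Kb ∈ kleinP ε μ ↔ μ = 1 := by
  have h : Kb = Ka ^ (0 : ℤ) * Kb ^ (1 : ℤ) := by simp
  rw [h, mem_kleinP_iff hε hμ, kphi_ab]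
  dsimp only
  rcases hε with rfl | rfl <;> rcases hμ with rfl | rfl <;> omega

/-! ### Main theorem -/

theorem klein_exactly_four_leftOrders :
    (∀ ε ∈ ({1, -1} : Set ℤ), ∀ μ ∈ ({1, -1} : Set ℤ), IsPositiveCone (kleinP ε μ)) ∧
    (∀ ε ∈ ({1, -1} : Set ℤ), ∀ μ ∈ ({1, -1} : Set ℤ),
      ∀ ε' ∈ ({1, -1} : Set ℤ), ∀ μ' ∈ ({1, -1} : Set ℤ),
        kleinP ε μ = kleinP ε' μ' → ε = ε' ∧ μ = μ') ∧
    (∀ r : KleinGroup → KleinGroup → Prop, IsStrictTotalOrder KleinGroup r →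
      (∀ g x y : KleinGroup, r x y → r (g * x) (g * y)) →
      ∃ ε ∈ ({1, -1} : Set ℤ), ∃ μ ∈ ({1, -1} : Set ℤ),
        {g : KleinGroup | r 1 g} = kleinP ε μ) := by
  refine ⟨?_, ?_, ?_⟩
  · intro ε hε μ hμ
    simp only [Set.mem_insert_iff, Set.mem_singleton_iff] at hε hμ
    exact kleinP_isCone hε hμ
  · intro ε hε μ hμ ε' hε' μ' hμ' heq
    simp only [Set.mem_insert_iff, Set.mem_singleton_iff] at hε hμ hε' hμ'
    have ha : ε = 1 ↔ ε' = 1 := by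
      rw [← ka_mem_iff hε hμ, ← ka_mem_iff hε' hμ', heq]
    have hb : μ = 1 ↔ μ' = 1 := by
      rw [← kb_mem_iff hε hμ, ← kb_mem_iff hε' hμ', heq]
    omega
  · intro r hto li
    classical
    have hirr : ∀ x, ¬ r x x := hto.irrefl
    have htrans : ∀ x y z : KleinGroup, r x y → r y z → r x z := fun _ _ _ => hto.trans _ _ _
    have htri : ∀ x y : KleinGroup, r x y ∨ x = y ∨ r y x := trichotomous_of r
    set P : Set KleinGroup := {g | r 1 g} with hP
    have hmulP : ∀ x ∈ P, ∀ y ∈ P, x * y ∈ P := by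
      intro x hx y hy
      have h1 : r x (x * y) := by simpa using li x 1 y hy
      exact htrans _ _ _ hx h1
    have hnotboth : ∀ g : KleinGroup, ¬(g ∈ P ∧ g⁻¹ ∈ P) := by
      rintro g ⟨h1, h2⟩
      have h3 : r g⁻¹ 1 := by simpa using li g⁻¹ 1 g h1
      exact hirr 1 (htrans _ _ _ h2 h3)
    have hPinv : ∀ g : KleinGroup, g ≠ 1 → g ∈ P ∨ g⁻¹ ∈ P := by
      intro g hg
      rcases htri 1 g with h | h | h
      · exact Or.inl h
      · exact absurd h.symm hg
      · right
        show r 1 g⁻¹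
        simpa using li g⁻¹ g 1 h
    have hKane : Ka ≠ 1 := by
      intro h
      have h2 := congrArg kphi h
      rw [kphi_a, map_one, KZ.one_def] at h2
      have := congrArg KZ.n h2
      simp at this
    have hKbne : Kb ≠ 1 := by
      intro h
      have h2 := congrArg kphi h
      rw [kphi_b, map_one, KZ.one_def] at h2
      have := congrArg KZ.m h2
      simp at this
    set ε : ℤ := if Ka ∈ P then 1 else -1 with hεdef
    set μ : ℤ := if Kb ∈ P then 1 else -1 with hμdef
    have hε : ε = 1 ∨ ε = -1 := by
      by_cases h : Ka ∈ P
      · left; rw [hεdef, if_pos h]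
      · right; rw [hεdef, if_neg h]
    have hμ : μ = 1 ∨ μ = -1 := by
      by_cases h : Kb ∈ P
      · left; rw [hμdef, if_pos h]
      · right; rw [hμdef, if_neg h]
    have haε : Ka ^ ε ∈ P := by
      by_cases h : Ka ∈ P
      · rw [hεdef, if_pos h, zpow_one]; exact h
      · rw [hεdef, if_neg h, zpow_neg_one]
        exact (hPinv Ka hKane).resolve_left h
    have hbμ : Kb ^ μ ∈ P := by
      by_cases h : Kb ∈ P
      · rw [hμdef, if_pos h, zpow_one]; exact h
      · rw [hμdef, if_neg h, zpow_neg_one]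
        exact (hPinv Kb hKbne).resolve_left h
    have hodd : ∀ k l l' : ℤ, Odd k → Ka ^ k * Kb ^ l ∈ P → Ka ^ k * Kb ^ l' ∈ P := by
      intro k l l' hk hg
      by_contra hh
      have hne : Ka ^ k * Kb ^ l' ≠ 1 := by
        intro e
        have h2 := congrArg kphi e
        rw [kphi_ab, map_one, KZ.one_def] at h2
        have hk0 : k = 0 := congrArg KZ.n h2
        rw [hk0] at hk
        exact (Int.not_odd_iff_even.mpr Even.zero) hk
      have hinv : (Ka ^ k * Kb ^ l')⁻¹ ∈ P := (hPinv _ hne).resolve_left hh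
      have hu : (Ka ^ k * Kb ^ l) * (Ka ^ k * Kb ^ l')⁻¹ ∈ P := hmulP _ hg _ hinv
      have hv : (Ka ^ k * Kb ^ l')⁻¹ * (Ka ^ k * Kb ^ l) ∈ P := hmulP _ hinv _ hg
      have hs : ((k).negOnePow : ℤ) = -1 := by
        rw [Int.negOnePow_odd _ hk]; simp
      have huv : ((Ka ^ k * Kb ^ l) * (Ka ^ k * Kb ^ l')⁻¹) *
          ((Ka ^ k * Kb ^ l')⁻¹ * (Ka ^ k * Kb ^ l)) = 1 := by
        apply kphi_inj
        rw [map_one, KZ.one_def]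
        simp only [map_mul, map_inv, map_zpow, kphi_a, kphi_b, KZ.a_zpow, KZ.b_zpow,
          KZ.mul_def, KZ.inv_def]
        ext <;> simp [Int.negOnePow_neg, hs] <;> ring
      have hvu : (Ka ^ k * Kb ^ l')⁻¹ * (Ka ^ k * Kb ^ l) =
          ((Ka ^ k * Kb ^ l) * (Ka ^ k * Kb ^ l')⁻¹)⁻¹ :=
        eq_inv_of_mul_eq_one_right huv
      exact hnotboth _ ⟨hu, hvu ▸ hv⟩
    have hoddε : Odd ε := by
      rcases hε with h | h <;> rw [h]
      · exact odd_one
      · exact ⟨-1, by ring⟩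
    have hstrip : ∀ n : ℤ, 1 ≤ n → ∀ l : ℤ, Ka ^ (ε * n) * Kb ^ l ∈ P := by
      intro n hn
      refine Int.le_induction
        (motive := fun n _ => ∀ l : ℤ, Ka ^ (ε * n) * Kb ^ l ∈ P) ?_ ?_ n hn
      · intro l
        have h0 : Ka ^ ε * Kb ^ (0 : ℤ) ∈ P := by simpa using haε
        have h1 := hodd ε 0 l hoddε h0
        rw [mul_one]
        exact h1
      · intro n hn ih l
        have h3 := hmulP _ haε _ (ih l)
        have he : Ka ^ (ε * (n + 1)) * Kb ^ l = Ka ^ ε * (Ka ^ (ε * n) * Kb ^ l) := by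
          rw [mul_add, mul_one, add_comm, zpow_add, mul_assoc]
        rw [he]
        exact h3
    have hbstrip : ∀ m : ℤ, 1 ≤ m → Kb ^ (μ * m) ∈ P := by
      intro m hm
      refine Int.le_induction
        (motive := fun m _ => Kb ^ (μ * m) ∈ P) ?_ ?_ m hm
      · show Kb ^ (μ * (1 : ℤ)) ∈ P
        rw [mul_one]; exact hbμ
      · intro m hm ih
        have he : Kb ^ (μ * (m + 1)) = Kb ^ μ * Kb ^ (μ * m) := by
          rw [mul_add, mul_one, add_comm, zpow_add]
        rw [he]
        exact hmulP _ hbμ _ ih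
    have hsub : kleinP ε μ ⊆ P := by
      rintro g ⟨n, m, hc, rfl⟩
      rcases hc with h1 | ⟨h0, h1⟩
      · exact hstrip n h1 (μ * m)
      · rw [h0, mul_zero, zpow_zero, one_mul]
        exact hbstrip m h1
    refine ⟨ε, ?_, μ, ?_, ?_⟩
    · rcases hε with h | h <;> rw [h] <;> simp
    · rcases hμ with h | h <;> rw [h] <;> simp
    · apply Set.Subset.antisymm
      · intro g hg
        rcases ((kleinP_isCone hε hμ).2 g).1 with h | h | h
        · exact h
        · exact absurd ⟨hg, hsub h⟩ (hnotboth g)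
        · rw [h] at hg
          exact absurd hg (hirr 1)
      · exact hsub
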